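/- arXiv:2410.21994 — 5 statements merged into one kernel-verified Lean document; each statement's English description precedes it below -/
import Mathlib

section
/- Let ℓ≥2 be an integer, ω∈ℝ, and let R:[a,π/2]→ℝ be twice continuously differentiable with R(a)=0. Then the following are equivalent: (I) −R″ + V_ℓR = ω²R on [a,π/2] and −2ω²R(π/2) + (ℓ(ℓ+1)(ℓ(ℓ+1)−2)/(6M))R′(π/2) + k²ℓ(ℓ+1)R(π/2) = 0; (II) for every smooth v:[a,π/2]→ℝ vanishing on a neighbourhood of a, ∫ₐ^{π/2}( R′v′ + V_ℓ R v ) dx + (6Mk²/(ℓ(ℓ+1)−2)) ∫ₐ^{π/2}( R′v + Rv′ ) dx = ω²( ∫ₐ^{π/2} R v dx + (12M/(ℓ(ℓ+1)(ℓ(ℓ+1)−2))) ∫ₐ^{π/2}( R′v + Rv′ ) dx ). -/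
/- The truncated "Robin" Regge–Wheeler eigenvalue problem on [a, π/2]
   (tortoise coordinate, truncated at r = 3M). -/

noncomputable section

open Filter Topology Set

namespace RWradial

/-- `Δ(r) = r² + k²r⁴ − 2Mr`. -/
def Del (M k r : ℝ) : ℝ := r ^ 2 + k ^ 2 * r ^ 4 - 2 * M * r

/-- `R` (with derivative data `R'`, `R''`) is a twice continuously differentiable
solution of the truncated "Robin" Regge–Wheeler eigenvalue problem on `[a, π/2]`:
`−R″ + V R = ω²R`, `R(a) = 0`, and the higher order "Robin" condition at `π/2`. -/
def EVPsol (M k a : ℝ) (V : ℝ → ℝ) (ℓ : ℕ) (ω : ℝ) (R R' R'' : ℝ → ℝ) : Prop :=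
  (∀ x ∈ Set.Icc a (Real.pi / 2), HasDerivWithinAt R (R' x) (Set.Icc a (Real.pi / 2)) x) ∧
  (∀ x ∈ Set.Icc a (Real.pi / 2), HasDerivWithinAt R' (R'' x) (Set.Icc a (Real.pi / 2)) x) ∧
  ContinuousOn R'' (Set.Icc a (Real.pi / 2)) ∧
  (∀ x ∈ Set.Icc a (Real.pi / 2), -R'' x + V x * R x = ω ^ 2 * R x) ∧
  R a = 0 ∧
  (-2 * ω ^ 2 * R (Real.pi / 2)
    + ((ℓ : ℝ) * ((ℓ : ℝ) + 1) * ((ℓ : ℝ) * ((ℓ : ℝ) + 1) - 2) / (6 * M)) * R' (Real.pi / 2)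
    + k ^ 2 * ((ℓ : ℝ) * ((ℓ : ℝ) + 1)) * R (Real.pi / 2) = 0)

/- Multiply the equation by a test function `v` with `v a = 0` and integrate by parts: since also
`R a = 0`, the integral `∫ (R' v + R v')` equals `R(π/2) v(π/2)`, and (II) becomes
`∫ (-R'' + V R - ω² R) v + B v(π/2) = 0` with `B = R'(π/2) + (6Mk²/(λ-2) - 12Mω²/(λ(λ-2))) R(π/2)`,
`λ = ℓ(ℓ+1)`; the Robin condition of (I) is `λ(λ-2)/(6M) · B = 0`. Test functions supported in
`(a, π/2)` force the residual to vanish (fundamental lemma of the calculus of variations), and a test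
function equal to `1` at `π/2` then forces `B = 0`. -/

theorem eqOn_zero_of_forall_integral_mul_eq_zero {f : ℝ → ℝ} {a b : ℝ} (hab : a < b)
    (hf : ContinuousOn f (Icc a b))
    (h : ∀ v : ℝ → ℝ, ContDiff ℝ (⊤ : ℕ∞) v → tsupport v ⊆ Ioo a b →
      ∫ x in a..b, f x * v x = 0) :
    EqOn f 0 (Icc a b) := by
  have hae : ∀ᵐ x, x ∈ Ioo a b → f x = 0 := by
    refine isOpen_Ioo.ae_eq_zero_of_integral_contDiff_smul_eq_zero
      ((hf.mono Ioo_subset_Icc_self).locallyIntegrableOn measurableSet_Ioo)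
      fun v hv _ hsupp => ?_
    have hsupp' : Function.support (fun x => f x * v x) ⊆ Ioc a b :=
      (Function.support_mul_subset_right _ _).trans
        ((subset_tsupport v).trans (hsupp.trans Ioo_subset_Ioc_self))
    simp_rw [smul_eq_mul, mul_comm (v _)]
    rw [← intervalIntegral.integral_eq_integral_of_support_subset hsupp']
    exact h v hv hsupp
  have hIoo : EqOn f 0 (Ioo a b) :=
    MeasureTheory.Measure.eqOn_open_of_ae_eq
      ((MeasureTheory.ae_restrict_iff' measurableSet_Ioo).2 hae) isOpen_Ioo
      (hf.mono Ioo_subset_Icc_self) continuousOn_const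
  exact hIoo.of_subset_closure hf continuousOn_const Ioo_subset_Icc_self
    (closure_Ioo hab.ne).symm.subset

theorem exists_contDiff_eventually_zero_eq_one {a b : ℝ} (hab : a ≠ b) :
    ∃ v : ℝ → ℝ, ContDiff ℝ (⊤ : ℕ∞) v ∧ (∀ᶠ x in 𝓝 a, v x = 0) ∧ v b = 1 := by
  obtain ⟨v, hsupp, -, hv, -, hvb⟩ :=
    exists_contDiff_tsupport_subset (n := ⊤) (isOpen_ne.mem_nhds hab.symm)
  exact ⟨v, hv, notMem_tsupport_iff_eventuallyEq.1 fun ha => hsupp ha rfl, hvb⟩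

theorem integral_mul_eq_zero_of_eqOn_zero {f : ℝ → ℝ} {a b : ℝ} (v : ℝ → ℝ) (hab : a ≤ b)
    (hf : EqOn f 0 (Icc a b)) : ∫ x in a..b, f x * v x = 0 := by
  rw [intervalIntegral.integral_congr (g := fun _ => 0) fun x hx => by
    simp [hf (uIcc_of_le hab ▸ hx)]]
  simp

theorem forall_integral_mul_add_mul_eq_zero_iff {f : ℝ → ℝ} {a b B : ℝ} (hab : a < b)
    (hf : ContinuousOn f (Icc a b)) :
    (∀ v : ℝ → ℝ, ContDiff ℝ (⊤ : ℕ∞) v → (∀ᶠ x in 𝓝 a, v x = 0) →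
      (∫ x in a..b, f x * v x) + B * v b = 0) ↔ EqOn f 0 (Icc a b) ∧ B = 0 := by
  constructor
  · intro h
    have hf0 : EqOn f 0 (Icc a b) := by
      refine eqOn_zero_of_forall_integral_mul_eq_zero hab hf fun v hv hsupp => ?_
      have hva : ∀ᶠ x in 𝓝 a, v x = 0 :=
        notMem_tsupport_iff_eventuallyEq.1 fun ha => (hsupp ha).1.false
      have hvb : v b = 0 := image_eq_zero_of_notMem_tsupport fun hb => (hsupp hb).2.false
      simpa [hvb] using h v hv hva
    obtain ⟨v, hv, hva, hvb⟩ := exists_contDiff_eventually_zero_eq_one hab.ne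
    refine ⟨hf0, ?_⟩
    simpa [integral_mul_eq_zero_of_eqOn_zero v hab.le hf0, hvb] using h v hv hva
  · rintro ⟨hf0, rfl⟩ v - -
    simp [integral_mul_eq_zero_of_eqOn_zero v hab.le hf0]

theorem integral_deriv_mul_add_mul_deriv_eq {a b : ℝ} {u u' v v' : ℝ → ℝ} (hab : a ≤ b)
    (hu : ∀ x ∈ Icc a b, HasDerivWithinAt u (u' x) (Icc a b) x)
    (hu' : ContinuousOn u' (Icc a b))
    (hv : ∀ x ∈ Icc a b, HasDerivWithinAt v (v' x) (Icc a b) x)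
    (hv' : ContinuousOn v' (Icc a b)) (ha : u a * v a = 0) :
    ∫ x in a..b, (u' x * v x + u x * v' x) = u b * v b := by
  rw [← uIcc_of_le hab] at hu hu' hv hv'
  rw [intervalIntegral.integral_deriv_mul_eq_sub_of_hasDerivWithinAt hu hv
    (hu'.intervalIntegrable) (hv'.intervalIntegrable), ha, sub_zero]

section WeakForm

variable {a b ω : ℝ} {V R R' R'' v v' : ℝ → ℝ}

theorem weakForm_sub_eq_integral_residual_mul_add (hab : a ≤ b)
    (hR : ∀ x ∈ Icc a b, HasDerivWithinAt R (R' x) (Icc a b) x)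
    (hR' : ∀ x ∈ Icc a b, HasDerivWithinAt R' (R'' x) (Icc a b) x)
    (hR'' : ContinuousOn R'' (Icc a b)) (hV : ContinuousOn V (Icc a b))
    (hv : ∀ x ∈ Icc a b, HasDerivWithinAt v (v' x) (Icc a b) x)
    (hv' : ContinuousOn v' (Icc a b)) (hva : v a = 0) :
    (∫ x in a..b, (R' x * v' x + V x * R x * v x)) - ω ^ 2 * ∫ x in a..b, R x * v x
      = (∫ x in a..b, (-R'' x + V x * R x - ω ^ 2 * R x) * v x) + R' b * v b := by
  have hRc : ContinuousOn R (Icc a b) := fun x hx => (hR x hx).continuousWithinAt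
  have hR'c : ContinuousOn R' (Icc a b) := fun x hx => (hR' x hx).continuousWithinAt
  have hvc : ContinuousOn v (Icc a b) := fun x hx => (hv x hx).continuousWithinAt
  have hint : ∀ g : ℝ → ℝ, ContinuousOn g (Icc a b) →
      IntervalIntegrable g MeasureTheory.volume a b :=
    fun g hg => hg.intervalIntegrable_of_Icc hab
  have hparts := integral_deriv_mul_add_mul_deriv_eq hab hR' hR'' hv hv' (by simp [hva])
  rw [← hparts, ← intervalIntegral.integral_const_mul,
    ← intervalIntegral.integral_sub (hint _ (by fun_prop)) (hint _ (by fun_prop)),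
    ← intervalIntegral.integral_add (hint _ (by fun_prop)) (hint _ (by fun_prop))]
  exact intervalIntegral.integral_congr fun x _ => by ring

theorem weakForm_eq_iff (hab : a ≤ b)
    (hR : ∀ x ∈ Icc a b, HasDerivWithinAt R (R' x) (Icc a b) x)
    (hR' : ∀ x ∈ Icc a b, HasDerivWithinAt R' (R'' x) (Icc a b) x)
    (hR'' : ContinuousOn R'' (Icc a b)) (hV : ContinuousOn V (Icc a b)) (hRa : R a = 0)
    (hv : ∀ x ∈ Icc a b, HasDerivWithinAt v (v' x) (Icc a b) x)
    (hv' : ContinuousOn v' (Icc a b)) (hva : v a = 0) (c d : ℝ) :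
    (∫ x in a..b, (R' x * v' x + V x * R x * v x))
        + c * (∫ x in a..b, (R' x * v x + R x * v' x))
      = ω ^ 2 * ((∫ x in a..b, R x * v x) + d * ∫ x in a..b, (R' x * v x + R x * v' x)) ↔
    (∫ x in a..b, (-R'' x + V x * R x - ω ^ 2 * R x) * v x)
      + (R' b + (c - ω ^ 2 * d) * R b) * v b = 0 := by
  have hR'c : ContinuousOn R' (Icc a b) := fun x hx => (hR' x hx).continuousWithinAt
  have hboundary := integral_deriv_mul_add_mul_deriv_eq hab hR hR'c hv hv' (by simp [hRa])
  have hgreen := weakForm_sub_eq_integral_residual_mul_add (ω := ω) hab hR hR' hR'' hV hv hv' hva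
  rw [hboundary]
  constructor
  · intro h; linear_combination h - hgreen
  · intro h; linear_combination h + hgreen

end WeakForm

theorem statement15_general
    (M k a : ℝ) (hM : 0 < M) (ha : a < Real.pi / 2)
    (V : ℝ → ℝ)
    (ℓ : ℕ) (hℓ : 2 ≤ ℓ) (ω : ℝ)
    (hVcont : ContinuousOn V (Set.Icc a (Real.pi / 2)))
    (R R' R'' : ℝ → ℝ)
    (hR1 : ∀ x ∈ Set.Icc a (Real.pi / 2),
      HasDerivWithinAt R (R' x) (Set.Icc a (Real.pi / 2)) x)
    (hR2 : ∀ x ∈ Set.Icc a (Real.pi / 2),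
      HasDerivWithinAt R' (R'' x) (Set.Icc a (Real.pi / 2)) x)
    (hR2c : ContinuousOn R'' (Set.Icc a (Real.pi / 2)))
    (hRa : R a = 0) :
    -- (I)
    ((∀ x ∈ Set.Icc a (Real.pi / 2), -R'' x + V x * R x = ω ^ 2 * R x)
      ∧ (-2 * ω ^ 2 * R (Real.pi / 2)
          + ((ℓ : ℝ) * ((ℓ : ℝ) + 1) * ((ℓ : ℝ) * ((ℓ : ℝ) + 1) - 2) / (6 * M)) *
              R' (Real.pi / 2)
          + k ^ 2 * ((ℓ : ℝ) * ((ℓ : ℝ) + 1)) * R (Real.pi / 2) = 0))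
    ↔
    -- (II)
    (∀ v : ℝ → ℝ, ContDiff ℝ (⊤ : ℕ∞) v → (∀ᶠ x in 𝓝 a, v x = 0) →
      (∫ x in a..(Real.pi / 2), (R' x * deriv v x + V x * R x * v x))
        + (6 * M * k ^ 2 / ((ℓ : ℝ) * ((ℓ : ℝ) + 1) - 2)) *
            (∫ x in a..(Real.pi / 2), (R' x * v x + R x * deriv v x))
      = ω ^ 2 *
          ((∫ x in a..(Real.pi / 2), R x * v x)
            + (12 * M / ((ℓ : ℝ) * ((ℓ : ℝ) + 1) * ((ℓ : ℝ) * ((ℓ : ℝ) + 1) - 2))) *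
                (∫ x in a..(Real.pi / 2), (R' x * v x + R x * deriv v x)))) := by
  set P := Real.pi / 2
  set lam : ℝ := (ℓ : ℝ) * ((ℓ : ℝ) + 1)
  have hlam : 6 ≤ lam := by
    have : (2 : ℝ) ≤ ℓ := by exact_mod_cast hℓ
    nlinarith
  have hlam0 : lam ≠ 0 := by positivity
  have hlam2 : lam - 2 ≠ 0 := by linarith
  have hrobin_coeff : lam * (lam - 2) / (6 * M) ≠ 0 := by positivity
  have hrobin : -2 * ω ^ 2 * R P + lam * (lam - 2) / (6 * M) * R' P + k ^ 2 * lam * R P = 0 ↔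
      R' P + (6 * M * k ^ 2 / (lam - 2) - ω ^ 2 * (12 * M / (lam * (lam - 2)))) * R P = 0 := by
    refine Iff.trans (Eq.congr_left ?_) (mul_eq_zero_iff_left hrobin_coeff)
    field_simp
    ring
  have hode : (∀ x ∈ Icc a P, -R'' x + V x * R x = ω ^ 2 * R x) ↔
      EqOn (fun x => -R'' x + V x * R x - ω ^ 2 * R x) 0 (Icc a P) :=
    forall₂_congr fun x _ => sub_eq_zero.symm
  have hRc : ContinuousOn R (Icc a P) := fun x hx => (hR1 x hx).continuousWithinAt
  rw [hode, hrobin, ← forall_integral_mul_add_mul_eq_zero_iff ha (by fun_prop)]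
  refine forall_congr' fun v => forall_congr' fun hv => forall_congr' fun hva => ?_
  have hv' : ∀ x, HasDerivAt v (deriv v x) x :=
    fun x => (hv.differentiable (by simp) x).hasDerivAt
  exact (weakForm_eq_iff ha.le hR1 hR2 hR2c hVcont hRa (fun x _ => (hv' x).hasDerivWithinAt)
    (hv.continuous_deriv (by simp)).continuousOn hva.self_of_nhds _ _).symm

/-- Weak formulation of the "Robin" Regge–Wheeler eigenvalue
problem: the classical formulation is equivalent to the variational identity for
all smooth test functions vanishing near `a`. -/
theorem statement15
    (M k a : ℝ) (hM : 0 < M) (hk : 0 < k) (ha : a < Real.pi / 2)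
    (ρ W V : ℝ → ℝ)
    (hρa : ρ a = 3 * M)
    (hρge : ∀ x ∈ Set.Ico a (Real.pi / 2), 3 * M ≤ ρ x)
    (hρd : ∀ x ∈ Set.Ico a (Real.pi / 2),
      HasDerivWithinAt ρ (Del M k (ρ x) / (ρ x) ^ 2) (Set.Ico a (Real.pi / 2)) x)
    (hρtop : Tendsto ρ (𝓝[<] (Real.pi / 2)) atTop)
    (hW : ∀ x ∈ Set.Ico a (Real.pi / 2), W x = Del M k (ρ x) / (ρ x) ^ 4)
    (hWend : W (Real.pi / 2) = k ^ 2)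
    (hWcont : ContinuousOn W (Set.Icc a (Real.pi / 2)))
    (ℓ : ℕ) (hℓ : 2 ≤ ℓ) (ω : ℝ)
    (hV : ∀ x ∈ Set.Ico a (Real.pi / 2),
      V x = W x * ((ℓ : ℝ) * ((ℓ : ℝ) + 1) - 6 * M / ρ x))
    (hVend : V (Real.pi / 2) = k ^ 2 * ((ℓ : ℝ) * ((ℓ : ℝ) + 1)))
    (hVcont : ContinuousOn V (Set.Icc a (Real.pi / 2)))
    (R R' R'' : ℝ → ℝ)
    (hR1 : ∀ x ∈ Set.Icc a (Real.pi / 2),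
      HasDerivWithinAt R (R' x) (Set.Icc a (Real.pi / 2)) x)
    (hR2 : ∀ x ∈ Set.Icc a (Real.pi / 2),
      HasDerivWithinAt R' (R'' x) (Set.Icc a (Real.pi / 2)) x)
    (hR2c : ContinuousOn R'' (Set.Icc a (Real.pi / 2)))
    (hRa : R a = 0) :
    -- (I)
    ((∀ x ∈ Set.Icc a (Real.pi / 2), -R'' x + V x * R x = ω ^ 2 * R x)
      ∧ (-2 * ω ^ 2 * R (Real.pi / 2)
          + ((ℓ : ℝ) * ((ℓ : ℝ) + 1) * ((ℓ : ℝ) * ((ℓ : ℝ) + 1) - 2) / (6 * M)) *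
              R' (Real.pi / 2)
          + k ^ 2 * ((ℓ : ℝ) * ((ℓ : ℝ) + 1)) * R (Real.pi / 2) = 0))
    ↔
    -- (II)
    (∀ v : ℝ → ℝ, ContDiff ℝ (⊤ : ℕ∞) v → (∀ᶠ x in 𝓝 a, v x = 0) →
      (∫ x in a..(Real.pi / 2), (R' x * deriv v x + V x * R x * v x))
        + (6 * M * k ^ 2 / ((ℓ : ℝ) * ((ℓ : ℝ) + 1) - 2)) *
            (∫ x in a..(Real.pi / 2), (R' x * v x + R x * deriv v x))
      = ω ^ 2 *
          ((∫ x in a..(Real.pi / 2), R x * v x)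
            + (12 * M / ((ℓ : ℝ) * ((ℓ : ℝ) + 1) * ((ℓ : ℝ) * ((ℓ : ℝ) + 1) - 2))) *
                (∫ x in a..(Real.pi / 2), (R' x * v x + R x * deriv v x)))) :=
  statement15_general M k a hM ha V ℓ hℓ ω hVcont R R' R'' hR1 hR2 hR2c hRa

end RWradial
end
end

section
/- For an integer ℓ≥2 let 𝒜 be the set of continuously differentiable R:[a,π/2]→ℝ with R(a)=0 and R not identically zero, and for R∈𝒜 define the twisted Rayleigh quotient Q_ℓ(R) = [ ∫ₐ^{π/2}( (R′)² + V_ℓR² ) dx + (6Mk²/(ℓ(ℓ+1)−2)) R(π/2)² ] / [ ∫ₐ^{π/2} R² dx + (12M/(ℓ(ℓ+1)(ℓ(ℓ+1)−2))) R(π/2)² ] (the denominator is strictly positive). Then: (i) for every integer ℓ≥2 and every R∈𝒜, Q_ℓ(R) ≥ (k²/2)·ℓ(ℓ+1); (ii) for every η>0 there exists L such that for every integer ℓ≥L there exists R∈𝒜 with Q_ℓ(R) ≤ (k²+η)·ℓ(ℓ+1). Consequently, the infimum ω_ℓ² of Q_ℓ over 𝒜 satisfies (k²/2)ℓ(ℓ+1)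 ≤ ω_ℓ² ≤ (k²+η)ℓ(ℓ+1) for all sufficiently large ℓ. -/
/- The truncated "Robin" Regge–Wheeler eigenvalue problem on [a, π/2]
   (tortoise coordinate, truncated at r = 3M). -/

noncomputable section

open Filter Topology Set

namespace RWradial

/-- The admissible class `𝒜`: continuously differentiable `R : [a,π/2] → ℝ`
(with derivative data `R'`) with `R(a) = 0` and `R` not identically zero. -/
def admis (a : ℝ) (R R' : ℝ → ℝ) : Prop :=
  (∀ x ∈ Set.Icc a (Real.pi / 2), HasDerivWithinAt R (R' x) (Set.Icc a (Real.pi / 2)) x) ∧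
  ContinuousOn R' (Set.Icc a (Real.pi / 2)) ∧
  R a = 0 ∧ (∃ x ∈ Set.Icc a (Real.pi / 2), R x ≠ 0)

/-- The numerator of the twisted Rayleigh quotient `Q_ℓ`. -/
def numQ (M k a : ℝ) (V : ℝ → ℝ) (ℓ : ℕ) (R R' : ℝ → ℝ) : ℝ :=
  (∫ x in a..(Real.pi / 2), ((R' x) ^ 2 + V x * (R x) ^ 2))
    + (6 * M * k ^ 2 / ((ℓ : ℝ) * ((ℓ : ℝ) + 1) - 2)) * (R (Real.pi / 2)) ^ 2

/-- The denominator of the twisted Rayleigh quotient `Q_ℓ`. -/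
def denQ (M a : ℝ) (ℓ : ℕ) (R : ℝ → ℝ) : ℝ :=
  (∫ x in a..(Real.pi / 2), (R x) ^ 2)
    + (12 * M / ((ℓ : ℝ) * ((ℓ : ℝ) + 1) * ((ℓ : ℝ) * ((ℓ : ℝ) + 1) - 2))) *
        (R (Real.pi / 2)) ^ 2

/-
Two pointwise facts about the potential drive everything. Since `ρ ≥ 3M`, we have
`W = k² + (ρ - 2M)/ρ³ ≥ k²` and `0 ≤ 6M/ρ ≤ 2`, hence `V_ℓ ≥ k²(ℓ(ℓ+1) - 2) ≥ (k²/2)ℓ(ℓ+1)`;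
the boundary weights of `Q_ℓ` are in exactly this ratio, so the lower bound follows by integrating.
For the upper bound, `V_ℓ ≤ W ℓ(ℓ+1)` and `W → k²` at `π/2`, so a fixed smooth test function
supported in a short interval `(b, π/2]` has potential energy at most `(k² + η/2)ℓ(ℓ+1)`
times its mass, while its kinetic energy does not grow with `ℓ`.
-/

open Real

lemma le_csInf_and_csInf_le_of_mem {α : Type*} [ConditionallyCompleteLattice α] {S : Set α}
    {c d q : α} (hc : ∀ p ∈ S, c ≤ p) (hq : q ∈ S) (hqd : q ≤ d) :
    c ≤ sInf S ∧ sInf S ≤ d :=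
  ⟨le_csInf ⟨q, hq⟩ hc, (csInf_le ⟨c, hc⟩ hq).trans hqd⟩

lemma exists_mem_Ico_forall_Ioc_lt {α β : Type*} [LinearOrder α] [TopologicalSpace α]
    [OrderTopology α] [LinearOrder β] [TopologicalSpace β] [OrderTopology β] {f : α → β}
    {a c : α} {y : β} (hac : a < c) (hf : ContinuousWithinAt f (Icc a c) c) (hy : f c < y) :
    ∃ b ∈ Ico a c, ∀ x ∈ Ioc b c, f x < y :=
  ((TFAE_mem_nhdsLE hac _).out 1 3).1 (hf (Iio_mem_nhds hy))

lemma eventually_le_mul_natCast_mul_succ (C : ℝ) {ε : ℝ} (hε : 0 < ε) :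
    ∀ᶠ ℓ : ℕ in atTop, C ≤ ε * ((ℓ : ℝ) * ((ℓ : ℝ) + 1)) := by
  filter_upwards [tendsto_natCast_atTop_atTop.eventually_ge_atTop (C / ε)] with ℓ hℓ
  rw [div_le_iff₀' hε] at hℓ
  nlinarith [mul_nonneg hε.le (sq_nonneg (ℓ : ℝ))]

lemma six_le_natCast_mul_succ {ℓ : ℕ} (hℓ : 2 ≤ ℓ) : (6 : ℝ) ≤ (ℓ : ℝ) * ((ℓ : ℝ) + 1) := by
  have : (2 : ℝ) ≤ ℓ := by exact_mod_cast hℓ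
  nlinarith

lemma sq_le_Del_div_pow_four {M k r : ℝ} (hr0 : 0 < r) (hr : 2 * M ≤ r) :
    k ^ 2 ≤ Del M k r / r ^ 4 := by
  rw [le_div_iff₀ (by positivity), Del]
  nlinarith [mul_nonneg hr0.le (sub_nonneg.2 hr)]

section RayleighQuotient

variable {M k a : ℝ} {V : ℝ → ℝ} {ℓ : ℕ} {R R' : ℝ → ℝ}

lemma admis.continuousOn (hR : admis a R R') : ContinuousOn R (Icc a (π / 2)) :=
  fun x hx => (hR.1 x hx).continuousWithinAt

lemma admis_smoothTransition_sub {b : ℝ} (hab : a ≤ b) (hb : b < π / 2) :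
    admis a (fun x => smoothTransition (x - b)) (deriv fun x => smoothTransition (x - b)) := by
  have hC : ContDiff ℝ 1 fun x => smoothTransition (x - b) :=
    smoothTransition.contDiff.comp (contDiff_id.sub contDiff_const)
  exact ⟨fun x _ => (hC.differentiable one_ne_zero x).hasDerivAt.hasDerivWithinAt,
    (hC.continuous_deriv le_rfl).continuousOn, smoothTransition.zero_of_nonpos (by linarith),
    π / 2, right_mem_Icc.2 (hab.trans hb.le), (smoothTransition.pos_of_pos (by linarith)).ne'⟩

lemma boundary_weight_nonneg (hM : 0 ≤ M) (hℓ : 2 ≤ ℓ) :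
    0 ≤ 12 * M / ((ℓ : ℝ) * ((ℓ : ℝ) + 1) * ((ℓ : ℝ) * ((ℓ : ℝ) + 1) - 2)) := by
  have := six_le_natCast_mul_succ hℓ
  exact div_nonneg (by linarith) (mul_nonneg (by linarith) (by linarith))

lemma boundary_weight_ratio (M k : ℝ) (hℓ : 2 ≤ ℓ) :
    6 * M * k ^ 2 / ((ℓ : ℝ) * ((ℓ : ℝ) + 1) - 2) = k ^ 2 / 2 * ((ℓ : ℝ) * ((ℓ : ℝ) + 1)) *
      (12 * M / ((ℓ : ℝ) * ((ℓ : ℝ) + 1) * ((ℓ : ℝ) * ((ℓ : ℝ) + 1) - 2))) := by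
  have := six_le_natCast_mul_succ hℓ
  have h0 : (ℓ : ℝ) * ((ℓ : ℝ) + 1) ≠ 0 := by linarith
  have h2 : (ℓ : ℝ) * ((ℓ : ℝ) + 1) - 2 ≠ 0 := by linarith
  field_simp
  ring

lemma denQ_pos (hM : 0 ≤ M) (ha : a < π / 2) (hℓ : 2 ≤ ℓ) (hR : admis a R R') :
    0 < denQ M a ℓ R := by
  obtain ⟨x₀, hx₀, hRx₀⟩ := hR.2.2.2
  have hmass : 0 < ∫ x in a..π / 2, R x ^ 2 :=
    intervalIntegral.integral_pos ha (hR.continuousOn.pow 2) (fun _ _ => sq_nonneg _)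
      ⟨x₀, hx₀, by positivity⟩
  have hend := mul_nonneg (boundary_weight_nonneg hM hℓ) (sq_nonneg (R (π / 2)))
  rw [denQ]
  linarith

lemma mul_denQ_le_numQ (hℓ : 2 ≤ ℓ) (hab : a ≤ π / 2) (hR : ContinuousOn R (Icc a (π / 2)))
    (hR' : ContinuousOn R' (Icc a (π / 2))) (hV : ContinuousOn V (Icc a (π / 2)))
    (hVge : ∀ x ∈ Icc a (π / 2), k ^ 2 / 2 * ((ℓ : ℝ) * ((ℓ : ℝ) + 1)) ≤ V x) :
    k ^ 2 / 2 * ((ℓ : ℝ) * ((ℓ : ℝ) + 1)) * denQ M a ℓ R ≤ numQ M k a V ℓ R R' := by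
  have hmono := intervalIntegral.integral_mono_on hab (μ := MeasureTheory.volume)
    (f := fun x => k ^ 2 / 2 * ((ℓ : ℝ) * ((ℓ : ℝ) + 1)) * R x ^ 2)
    (g := fun x => R' x ^ 2 + V x * R x ^ 2)
    (ContinuousOn.intervalIntegrable_of_Icc hab (by fun_prop))
    (ContinuousOn.intervalIntegrable_of_Icc hab (by fun_prop)) fun x hx => by
      nlinarith [mul_le_mul_of_nonneg_right (hVge x hx) (sq_nonneg (R x)), sq_nonneg (R' x)]
  rw [intervalIntegral.integral_const_mul] at hmono
  rw [numQ, denQ, boundary_weight_ratio M k hℓ]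
  linear_combination hmono

lemma numQ_le_mul_denQ (hM : 0 ≤ M) (hℓ : 2 ≤ ℓ) {η : ℝ} (hη : 0 ≤ η) (hab : a ≤ π / 2)
    (hR : ContinuousOn R (Icc a (π / 2))) (hR' : ContinuousOn R' (Icc a (π / 2)))
    (hV : ContinuousOn V (Icc a (π / 2)))
    (hkin : ∫ x in a..π / 2, R' x ^ 2 ≤
      η / 2 * ((ℓ : ℝ) * ((ℓ : ℝ) + 1)) * ∫ x in a..π / 2, R x ^ 2)
    (hVle : ∀ x ∈ Icc a (π / 2),
      V x * R x ^ 2 ≤ (k ^ 2 + η / 2) * ((ℓ : ℝ) * ((ℓ : ℝ) + 1)) * R x ^ 2) :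
    numQ M k a V ℓ R R' ≤ (k ^ 2 + η) * ((ℓ : ℝ) * ((ℓ : ℝ) + 1)) * denQ M a ℓ R := by
  have hVR : IntervalIntegrable (fun x => V x * R x ^ 2) MeasureTheory.volume a (π / 2) :=
    ContinuousOn.intervalIntegrable_of_Icc hab (by fun_prop)
  have hpot := intervalIntegral.integral_mono_on hab hVR
    (g := fun x => (k ^ 2 + η / 2) * ((ℓ : ℝ) * ((ℓ : ℝ) + 1)) * R x ^ 2)
    (ContinuousOn.intervalIntegrable_of_Icc hab (by fun_prop)) hVle
  rw [intervalIntegral.integral_const_mul] at hpot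
  have hsplit := intervalIntegral.integral_add
    (ContinuousOn.intervalIntegrable_of_Icc (u := fun x => R' x ^ 2) hab (by fun_prop)) hVR
  have hend : 0 ≤ (k ^ 2 / 2 + η) * ((ℓ : ℝ) * ((ℓ : ℝ) + 1)) *
      (12 * M / ((ℓ : ℝ) * ((ℓ : ℝ) + 1) * ((ℓ : ℝ) * ((ℓ : ℝ) + 1) - 2))) * R (π / 2) ^ 2 := by
    have := boundary_weight_nonneg hM hℓ
    positivity
  rw [numQ, denQ, hsplit, boundary_weight_ratio M k hℓ]
  linear_combination hkin + hpot + hend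

end RayleighQuotient

structure IsRWPotential (M k a : ℝ) (ρ W : ℝ → ℝ) (V : ℕ → ℝ → ℝ) : Prop where
  ρ_ge : ∀ x ∈ Ico a (π / 2), 3 * M ≤ ρ x
  W_eq : ∀ x ∈ Ico a (π / 2), W x = Del M k (ρ x) / (ρ x) ^ 4
  W_end : W (π / 2) = k ^ 2
  W_cont : ContinuousOn W (Icc a (π / 2))
  V_eq : ∀ ℓ : ℕ, 2 ≤ ℓ → ∀ x ∈ Ico a (π / 2),
    V ℓ x = W x * ((ℓ : ℝ) * ((ℓ : ℝ) + 1) - 6 * M / ρ x)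
  V_end : ∀ ℓ : ℕ, 2 ≤ ℓ → V ℓ (π / 2) = k ^ 2 * ((ℓ : ℝ) * ((ℓ : ℝ) + 1))
  V_cont : ∀ ℓ : ℕ, 2 ≤ ℓ → ContinuousOn (V ℓ) (Icc a (π / 2))

namespace IsRWPotential

variable {M k a : ℝ} {ρ W : ℝ → ℝ} {V : ℕ → ℝ → ℝ} {ℓ : ℕ}

lemma sq_le_W (hP : IsRWPotential M k a ρ W V) (hM : 0 < M) :
    ∀ x ∈ Icc a (π / 2), k ^ 2 ≤ W x := by
  intro x hx
  rcases hx.2.eq_or_lt with rfl | hlt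
  · exact hP.W_end.ge
  · have hρ := hP.ρ_ge x ⟨hx.1, hlt⟩
    rw [hP.W_eq x ⟨hx.1, hlt⟩]
    exact sq_le_Del_div_pow_four (by linarith) (by linarith)

lemma V_mem_Icc (hP : IsRWPotential M k a ρ W V) (hM : 0 < M) (hℓ : 2 ≤ ℓ) :
    ∀ x ∈ Icc a (π / 2), V ℓ x ∈
      Icc (W x * ((ℓ : ℝ) * ((ℓ : ℝ) + 1) - 2)) (W x * ((ℓ : ℝ) * ((ℓ : ℝ) + 1))) := by
  intro x hx
  have hW : 0 ≤ W x := (sq_nonneg k).trans (hP.sq_le_W hM x hx)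
  rcases hx.2.eq_or_lt with rfl | hlt
  · rw [hP.V_end ℓ hℓ, hP.W_end]
    exact ⟨by nlinarith [sq_nonneg k], le_rfl⟩
  · have hρ := hP.ρ_ge x ⟨hx.1, hlt⟩
    have h2 : 6 * M / ρ x ≤ 2 := by rw [div_le_iff₀ (by linarith)]; linarith
    have h0 : 0 ≤ 6 * M / ρ x := div_nonneg (by linarith) (by linarith)
    rw [hP.V_eq ℓ hℓ x ⟨hx.1, hlt⟩]
    exact ⟨mul_le_mul_of_nonneg_left (by linarith) hW,
      mul_le_mul_of_nonneg_left (by linarith) hW⟩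

lemma half_mul_le_V (hP : IsRWPotential M k a ρ W V) (hM : 0 < M) (hℓ : 2 ≤ ℓ) :
    ∀ x ∈ Icc a (π / 2), k ^ 2 / 2 * ((ℓ : ℝ) * ((ℓ : ℝ) + 1)) ≤ V ℓ x := by
  intro x hx
  have hlam := six_le_natCast_mul_succ hℓ
  have hW := hP.sq_le_W hM x hx
  have hV := (hP.V_mem_Icc hM hℓ x hx).1
  nlinarith [mul_nonneg (sub_nonneg.2 hW) (by linarith : (0 : ℝ) ≤ ℓ * (ℓ + 1) - 2),
    mul_nonneg (sq_nonneg k) (by linarith : (0 : ℝ) ≤ ℓ * (ℓ + 1) - 4)]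

lemma eventually_exists_numQ_div_denQ_le (hP : IsRWPotential M k a ρ W V) (hM : 0 < M)
    (ha : a < π / 2) {η : ℝ} (hη : 0 < η) :
    ∀ᶠ ℓ : ℕ in atTop, ∃ R R' : ℝ → ℝ, admis a R R' ∧
      numQ M k a (V ℓ) ℓ R R' / denQ M a ℓ R ≤ (k ^ 2 + η) * ((ℓ : ℝ) * ((ℓ : ℝ) + 1)) := by
  obtain ⟨b, hb, hWb⟩ := exists_mem_Ico_forall_Ioc_lt ha
    (hP.W_cont _ (right_mem_Icc.2 ha.le)) (y := k ^ 2 + η / 2) (by rw [hP.W_end]; linarith)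
  set R : ℝ → ℝ := fun x => smoothTransition (x - b)
  have hR : admis a R (deriv R) := admis_smoothTransition_sub hb.1 hb.2
  have hmass : 0 < ∫ x in a..π / 2, R x ^ 2 :=
    intervalIntegral.integral_pos ha (hR.continuousOn.pow 2) (fun _ _ => sq_nonneg _)
      ⟨π / 2, right_mem_Icc.2 ha.le, pow_pos (smoothTransition.pos_of_pos (by linarith [hb.2])) 2⟩
  filter_upwards [eventually_ge_atTop 2, eventually_le_mul_natCast_mul_succ
    (∫ x in a..π / 2, deriv R x ^ 2) (mul_pos (half_pos hη) hmass)] with ℓ hℓ hkin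
  refine ⟨R, deriv R, hR, (div_le_iff₀ (denQ_pos hM.le ha hℓ hR)).2 ?_⟩
  refine numQ_le_mul_denQ hM.le hℓ hη.le ha.le hR.continuousOn hR.2.1 (hP.V_cont ℓ hℓ)
    (hkin.trans_eq (by ring)) fun x hx => ?_
  rcases le_or_gt x b with hxb | hxb
  · simp [R, smoothTransition.zero_of_nonpos (sub_nonpos.2 hxb)]
  · refine mul_le_mul_of_nonneg_right ((hP.V_mem_Icc hM hℓ x hx).2.trans ?_) (sq_nonneg _)
    exact mul_le_mul_of_nonneg_right (hWb x ⟨hxb, hx.2⟩).le (by positivity)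

end IsRWPotential

theorem statement16_general
    (M k a : ℝ) (hM : 0 < M) (ha : a < Real.pi / 2)
    (ρ W : ℝ → ℝ) (V : ℕ → ℝ → ℝ)
    (hρge : ∀ x ∈ Set.Ico a (Real.pi / 2), 3 * M ≤ ρ x)
    (hW : ∀ x ∈ Set.Ico a (Real.pi / 2), W x = Del M k (ρ x) / (ρ x) ^ 4)
    (hWend : W (Real.pi / 2) = k ^ 2)
    (hWcont : ContinuousOn W (Set.Icc a (Real.pi / 2)))
    (hV : ∀ ℓ : ℕ, 2 ≤ ℓ → ∀ x ∈ Set.Ico a (Real.pi / 2),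
      V ℓ x = W x * ((ℓ : ℝ) * ((ℓ : ℝ) + 1) - 6 * M / ρ x))
    (hVend : ∀ ℓ : ℕ, 2 ≤ ℓ → V ℓ (Real.pi / 2) = k ^ 2 * ((ℓ : ℝ) * ((ℓ : ℝ) + 1)))
    (hVcont : ∀ ℓ : ℕ, 2 ≤ ℓ → ContinuousOn (V ℓ) (Set.Icc a (Real.pi / 2))) :
    -- (i)
    (∀ ℓ : ℕ, 2 ≤ ℓ → ∀ R R' : ℝ → ℝ, admis a R R' →
      0 < denQ M a ℓ R ∧
        (k ^ 2 / 2) * ((ℓ : ℝ) * ((ℓ : ℝ) + 1)) ≤ numQ M k a (V ℓ) ℓ R R' / denQ M a ℓ R)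
    ∧
    -- (ii)
    (∀ η : ℝ, 0 < η → ∃ L : ℕ, ∀ ℓ : ℕ, L ≤ ℓ →
      ∃ R R' : ℝ → ℝ, admis a R R' ∧
        numQ M k a (V ℓ) ℓ R R' / denQ M a ℓ R ≤ (k ^ 2 + η) * ((ℓ : ℝ) * ((ℓ : ℝ) + 1)))
    ∧
    -- (iii)
    (∀ η : ℝ, 0 < η → ∃ L : ℕ, ∀ ℓ : ℕ, L ≤ ℓ →
      (k ^ 2 / 2) * ((ℓ : ℝ) * ((ℓ : ℝ) + 1)) ≤
          sInf {q : ℝ | ∃ R R' : ℝ → ℝ,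
            admis a R R' ∧ q = numQ M k a (V ℓ) ℓ R R' / denQ M a ℓ R}
        ∧ sInf {q : ℝ | ∃ R R' : ℝ → ℝ,
            admis a R R' ∧ q = numQ M k a (V ℓ) ℓ R R' / denQ M a ℓ R} ≤
              (k ^ 2 + η) * ((ℓ : ℝ) * ((ℓ : ℝ) + 1))) := by
  have hP : IsRWPotential M k a ρ W V := ⟨hρge, hW, hWend, hWcont, hV, hVend, hVcont⟩
  have lower : ∀ ℓ : ℕ, 2 ≤ ℓ → ∀ R R' : ℝ → ℝ, admis a R R' →
      0 < denQ M a ℓ R ∧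
        (k ^ 2 / 2) * ((ℓ : ℝ) * ((ℓ : ℝ) + 1)) ≤ numQ M k a (V ℓ) ℓ R R' / denQ M a ℓ R :=
    fun ℓ hℓ R R' hR =>
      ⟨denQ_pos hM.le ha hℓ hR, (le_div_iff₀ (denQ_pos hM.le ha hℓ hR)).2 <|
        mul_denQ_le_numQ hℓ ha.le hR.continuousOn hR.2.1 (hP.V_cont ℓ hℓ)
          (hP.half_mul_le_V hM hℓ)⟩
  have upper := fun η (hη : 0 < η) => hP.eventually_exists_numQ_div_denQ_le hM ha hη
  refine ⟨lower, fun η hη => eventually_atTop.1 (upper η hη), fun η hη => eventually_atTop.1 ?_⟩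
  filter_upwards [upper η hη, eventually_ge_atTop 2] with ℓ ⟨R, R', hR, hQ⟩ hℓ
  refine le_csInf_and_csInf_le_of_mem ?_ ⟨R, R', hR, rfl⟩ hQ
  rintro _ ⟨S, S', hS, rfl⟩
  exact (lower ℓ hℓ S S' hS).2

/-- Two-sided bounds on the twisted Rayleigh quotient: (i) the
pointwise lower bound `(k²/2)ℓ(ℓ+1)` (and strict positivity of the denominator), (ii)
near-optimal test functions for large `ℓ`, and consequently (iii) the two-sided bound
`(k²/2)ℓ(ℓ+1) ≤ ω_ℓ² ≤ (k²+η)ℓ(ℓ+1)` for the infimum `ω_ℓ²` of the quotient, for all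
sufficiently large `ℓ`. -/
theorem statement16
    (M k a : ℝ) (hM : 0 < M) (hk : 0 < k) (ha : a < Real.pi / 2)
    (ρ W : ℝ → ℝ) (V : ℕ → ℝ → ℝ)
    (hρa : ρ a = 3 * M)
    (hρge : ∀ x ∈ Set.Ico a (Real.pi / 2), 3 * M ≤ ρ x)
    (hρd : ∀ x ∈ Set.Ico a (Real.pi / 2),
      HasDerivWithinAt ρ (Del M k (ρ x) / (ρ x) ^ 2) (Set.Ico a (Real.pi / 2)) x)
    (hρtop : Tendsto ρ (𝓝[<] (Real.pi / 2)) atTop)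
    (hW : ∀ x ∈ Set.Ico a (Real.pi / 2), W x = Del M k (ρ x) / (ρ x) ^ 4)
    (hWend : W (Real.pi / 2) = k ^ 2)
    (hWcont : ContinuousOn W (Set.Icc a (Real.pi / 2)))
    (hV : ∀ ℓ : ℕ, 2 ≤ ℓ → ∀ x ∈ Set.Ico a (Real.pi / 2),
      V ℓ x = W x * ((ℓ : ℝ) * ((ℓ : ℝ) + 1) - 6 * M / ρ x))
    (hVend : ∀ ℓ : ℕ, 2 ≤ ℓ → V ℓ (Real.pi / 2) = k ^ 2 * ((ℓ : ℝ) * ((ℓ : ℝ) + 1)))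
    (hVcont : ∀ ℓ : ℕ, 2 ≤ ℓ → ContinuousOn (V ℓ) (Set.Icc a (Real.pi / 2))) :
    -- (i)
    (∀ ℓ : ℕ, 2 ≤ ℓ → ∀ R R' : ℝ → ℝ, admis a R R' →
      0 < denQ M a ℓ R ∧
        (k ^ 2 / 2) * ((ℓ : ℝ) * ((ℓ : ℝ) + 1)) ≤ numQ M k a (V ℓ) ℓ R R' / denQ M a ℓ R)
    ∧
    -- (ii)
    (∀ η : ℝ, 0 < η → ∃ L : ℕ, ∀ ℓ : ℕ, L ≤ ℓ →
      ∃ R R' : ℝ → ℝ, admis a R R' ∧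
        numQ M k a (V ℓ) ℓ R R' / denQ M a ℓ R ≤ (k ^ 2 + η) * ((ℓ : ℝ) * ((ℓ : ℝ) + 1)))
    ∧
    -- (iii)
    (∀ η : ℝ, 0 < η → ∃ L : ℕ, ∀ ℓ : ℕ, L ≤ ℓ →
      (k ^ 2 / 2) * ((ℓ : ℝ) * ((ℓ : ℝ) + 1)) ≤
          sInf {q : ℝ | ∃ R R' : ℝ → ℝ,
            admis a R R' ∧ q = numQ M k a (V ℓ) ℓ R R' / denQ M a ℓ R}
        ∧ sInf {q : ℝ | ∃ R R' : ℝ → ℝ,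
            admis a R R' ∧ q = numQ M k a (V ℓ) ℓ R R' / denQ M a ℓ R} ≤
              (k ^ 2 + η) * ((ℓ : ℝ) * ((ℓ : ℝ) + 1))) :=
  statement16_general M k a hM ha ρ W V hρge hW hWend hWcont hV hVend hVcont

end RWradial
end
end

section
/- Let ℓ≥2 be an integer, ω∈ℝ, and let R:[a,π/2]→ℝ be a twice continuously differentiable solution of the truncated 'Robin' Regge–Wheeler eigenvalue problem: −R″ + V_ℓR = ω²R on [a,π/2], R(a)=0, and −2ω²R(π/2) + (ℓ(ℓ+1)(ℓ(ℓ+1)−2)/(6M))R′(π/2) + k²ℓ(ℓ+1)R(π/2) = 0. Then for every twice continuously differentiable φ:[a,π/2]→ℝ with φ(π/2)=0, the weighted (Agmon) energy identity holds: ∫ₐ^{π/2} [ ((R e^{φ})′)² + ( (V_ℓ − ω²) − (φ′)² ) R² e^{2φ} ] dx = ( 12Mω²/(ℓ(ℓ+1)(ℓ(ℓ+1)−2)) − 6Mk²/(ℓ(ℓ+1)−2) ) R(π/2)². -/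
/- The truncated "Robin" Regge–Wheeler eigenvalue problem on [a, π/2]
   (tortoise coordinate, truncated at r = 3M). -/

noncomputable section

open Filter Topology Set

namespace RWradial

/-- The weighted (Agmon) energy identity for solutions of the
truncated "Robin" Regge–Wheeler eigenvalue problem, for every twice continuously
differentiable weight `φ` with `φ(π/2) = 0`. -/
theorem statement17
    (M k a : ℝ) (hM : 0 < M) (hk : 0 < k) (ha : a < Real.pi / 2)
    (ρ W V : ℝ → ℝ)
    (hρa : ρ a = 3 * M)
    (hρge : ∀ x ∈ Set.Ico a (Real.pi / 2), 3 * M ≤ ρ x)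
    (hρd : ∀ x ∈ Set.Ico a (Real.pi / 2),
      HasDerivWithinAt ρ (Del M k (ρ x) / (ρ x) ^ 2) (Set.Ico a (Real.pi / 2)) x)
    (hρtop : Tendsto ρ (𝓝[<] (Real.pi / 2)) atTop)
    (hW : ∀ x ∈ Set.Ico a (Real.pi / 2), W x = Del M k (ρ x) / (ρ x) ^ 4)
    (hWend : W (Real.pi / 2) = k ^ 2)
    (hWcont : ContinuousOn W (Set.Icc a (Real.pi / 2)))
    (ℓ : ℕ) (hℓ : 2 ≤ ℓ) (ω : ℝ)
    (hV : ∀ x ∈ Set.Ico a (Real.pi / 2),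
      V x = W x * ((ℓ : ℝ) * ((ℓ : ℝ) + 1) - 6 * M / ρ x))
    (hVend : V (Real.pi / 2) = k ^ 2 * ((ℓ : ℝ) * ((ℓ : ℝ) + 1)))
    (hVcont : ContinuousOn V (Set.Icc a (Real.pi / 2)))
    (R R' R'' : ℝ → ℝ)
    (hEVP : EVPsol M k a V ℓ ω R R' R'')
    (φ φ' φ'' : ℝ → ℝ)
    (hφ1 : ∀ x ∈ Set.Icc a (Real.pi / 2),
      HasDerivWithinAt φ (φ' x) (Set.Icc a (Real.pi / 2)) x)
    (hφ2 : ∀ x ∈ Set.Icc a (Real.pi / 2),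
      HasDerivWithinAt φ' (φ'' x) (Set.Icc a (Real.pi / 2)) x)
    (hφ2c : ContinuousOn φ'' (Set.Icc a (Real.pi / 2)))
    (hφend : φ (Real.pi / 2) = 0) :
    (∫ x in a..(Real.pi / 2),
        (((R' x + R x * φ' x) * Real.exp (φ x)) ^ 2
          + ((V x - ω ^ 2) - (φ' x) ^ 2) * (R x) ^ 2 * Real.exp (2 * φ x)))
    = (12 * M * ω ^ 2 / ((ℓ : ℝ) * ((ℓ : ℝ) + 1) * ((ℓ : ℝ) * ((ℓ : ℝ) + 1) - 2))
        - 6 * M * k ^ 2 / ((ℓ : ℝ) * ((ℓ : ℝ) + 1) - 2)) * (R (Real.pi / 2)) ^ 2 := by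
  obtain ⟨hR1, hR2, hR2c, hode, hRa, hrobin⟩ := hEVP
  set b := Real.pi / 2 with hb
  have hab : a ≤ b := ha.le
  set G : ℝ → ℝ := fun x => R x * R' x * Real.exp (2 * φ x) with hG
  set f : ℝ → ℝ := fun x =>
    ((R' x + R x * φ' x) * Real.exp (φ x)) ^ 2
      + ((V x - ω ^ 2) - (φ' x) ^ 2) * (R x) ^ 2 * Real.exp (2 * φ x) with hf
  have hGd : ∀ x ∈ Set.Icc a b, HasDerivWithinAt G (f x) (Set.Icc a b) x := by
    intro x hx
    have h1 : HasDerivWithinAt (fun y => R y * R' y * Real.exp (2 * φ y))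
        ((R' x * R' x + R x * R'' x) * Real.exp (2 * φ x)
          + R x * R' x * (Real.exp (2 * φ x) * (2 * φ' x))) (Set.Icc a b) x := by
      exact ((hR1 x hx).mul (hR2 x hx)).mul (((hφ1 x hx).const_mul 2).exp)
    have hode' : R'' x = (V x - ω ^ 2) * R x := by
      have := hode x hx; linarith
    convert h1 using 1
    have hexp : Real.exp (φ x) ^ 2 = Real.exp (2 * φ x) := by
      rw [sq, ← Real.exp_add]; ring_nf
    simp only [hf, hode', ← hexp]
    ring
  have hRc : ContinuousOn R (Set.Icc a b) := fun x hx => (hR1 x hx).continuousWithinAt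
  have hR'c : ContinuousOn R' (Set.Icc a b) := fun x hx => (hR2 x hx).continuousWithinAt
  have hφc : ContinuousOn φ (Set.Icc a b) := fun x hx => (hφ1 x hx).continuousWithinAt
  have hφ'c : ContinuousOn φ' (Set.Icc a b) := fun x hx => (hφ2 x hx).continuousWithinAt
  have hfc : ContinuousOn f (Set.Icc a b) := by
    apply ContinuousOn.add
    · exact (((hR'c.add (hRc.mul hφ'c)).mul (Real.continuous_exp.comp_continuousOn hφc)).pow 2)
    · exact (((hVcont.sub continuousOn_const).sub (hφ'c.pow 2)).mul (hRc.pow 2)).mul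
        (Real.continuous_exp.comp_continuousOn (continuousOn_const.mul hφc))
  have hGc : ContinuousOn G (Set.Icc a b) :=
    (hRc.mul hR'c).mul (Real.continuous_exp.comp_continuousOn (continuousOn_const.mul hφc))
  have hint : IntervalIntegrable f MeasureTheory.volume a b := by
    apply ContinuousOn.intervalIntegrable
    rwa [Set.uIcc_of_le hab]
  have key : ∫ x in a..b, f x = G b - G a := by
    apply intervalIntegral.integral_eq_sub_of_hasDeriv_right_of_le hab hGc _ hint
    intro x hx
    exact ((hGd x (Set.Ioo_subset_Icc_self hx)).hasDerivAt
      (Icc_mem_nhds hx.1 hx.2)).hasDerivWithinAt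
  have hGa : G a = 0 := by simp [hG, hRa]
  have hGb : G b = R b * R' b := by simp [hG, hφend]
  rw [show (∫ x in a..(Real.pi/2),
        (((R' x + R x * φ' x) * Real.exp (φ x)) ^ 2
          + ((V x - ω ^ 2) - (φ' x) ^ 2) * (R x) ^ 2 * Real.exp (2 * φ x)))
      = ∫ x in a..b, f x from rfl, key, hGa, hGb, sub_zero]
  -- now finish with the Robin condition
  have hℓ2 : (2:ℝ) ≤ (ℓ:ℝ) := by exact_mod_cast hℓ
  have hL0 : (ℓ:ℝ) * ((ℓ:ℝ) + 1) ≠ 0 := by nlinarith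
  have hL2 : (ℓ:ℝ) * ((ℓ:ℝ) + 1) - 2 ≠ 0 := by nlinarith
  have hM' : M ≠ 0 := hM.ne'
  have hR'b : R' b = 6 * M * (2 * ω ^ 2 - k ^ 2 * ((ℓ:ℝ) * ((ℓ:ℝ) + 1))) * R b
      / ((ℓ:ℝ) * ((ℓ:ℝ) + 1) * ((ℓ:ℝ) * ((ℓ:ℝ) + 1) - 2)) := by
    field_simp at hrobin ⊢
    linarith
  rw [hR'b]
  field_simp
  ring

end RWradial
end
end

section
/- Let x₀ ∈ (a,π/2), δ>0 with x₀+2δ<π/2, and η>0 with k²+3η < W(x₀+2δ). Then there exist constants C>0 and L>0 (depending only on M, k, a, x₀, δ, η) such that for every integer ℓ≥L and every twice continuously differentiable solution R:[a,π/2]→ℝ of the truncated 'Robin' Regge–Wheeler eigenvalue problem (−R″+V_ℓR=ω²R on [a,π/2], R(a)=0, −2ω²R(π/2)+(ℓ(ℓ+1)(ℓ(ℓ+1)−2)/(6M))R′(π/2)+k²ℓ(ℓ+1)R(π/2)=0) whose eigenvalue satisfies ω² ≤ (k²+η)ℓ(ℓ+1), the energy is exponentially small in the classically forbidden region: ∫ₐ^{x₀}(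 (R′)² + ℓ(ℓ+1)R² ) dx ≤ C e^{−ℓ/C} ∫ₐ^{π/2}( (R′)² + ℓ(ℓ+1)R² ) dx. -/
/- The truncated "Robin" Regge–Wheeler eigenvalue problem on [a, π/2]
   (tortoise coordinate, truncated at r = 3M). -/

noncomputable section

open Filter Topology Set

namespace RWradial

/-! Write `λ = ℓ(ℓ+1)`. On `[a, x₀+2δ]` we have `W ≥ W(x₀+2δ) > k² + 3η` and `ρ ≥ 3M`, so for
large `ℓ` the equation reads `R″ = qR` there with `q = V_ℓ − ω² ≥ ηλ =: μ²`. The flux `F = RR′`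
vanishes at `a` and `F′ = R′² + qR² ≥ 2μF` by AM–GM, so `e^{−2μx} F` is nondecreasing. Hence
`F ≥ 0` and `F(x₀) ≤ e^{−2μδ} F(x) ≤ e^{−2μδ} (R′² + λR²)(x) / 2` for `x ∈ [x₀+δ, x₀+2δ]`;
averaging over this interval bounds `F(x₀)` by `e^{−2μδ} / (2δ)` times the energy. Finally
`∫ₐ^{x₀} (R′² + qR²) = F(x₀)` and `R′² + λR² ≤ (1 + 1/η)(R′² + qR²)`. -/

section Agmon

variable {a b μ : ℝ} {R R' R'' : ℝ → ℝ}

theorem hasDerivAt_mul_deriv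
    (hR : ∀ x ∈ Icc a b, HasDerivWithinAt R (R' x) (Icc a b) x)
    (hR' : ∀ x ∈ Icc a b, HasDerivWithinAt R' (R'' x) (Icc a b) x) {x : ℝ} (hx : x ∈ Ioo a b) :
    HasDerivAt (fun y => R y * R' y) (R' x ^ 2 + R x * R'' x) x := by
  have hnhds := Icc_mem_nhds hx.1 hx.2
  refine (((hR x (Ioo_subset_Icc_self hx)).hasDerivAt hnhds).mul
    ((hR' x (Ioo_subset_Icc_self hx)).hasDerivAt hnhds)).congr_deriv ?_
  ring

theorem continuousOn_mul_deriv
    (hR : ∀ x ∈ Icc a b, HasDerivWithinAt R (R' x) (Icc a b) x)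
    (hR' : ∀ x ∈ Icc a b, HasDerivWithinAt R' (R'' x) (Icc a b) x) :
    ContinuousOn (fun y => R y * R' y) (Icc a b) := fun x hx =>
  (hR x hx).continuousWithinAt.mul (hR' x hx).continuousWithinAt

theorem monotoneOn_exp_mul_mul_deriv
    (hR : ∀ x ∈ Icc a b, HasDerivWithinAt R (R' x) (Icc a b) x)
    (hR' : ∀ x ∈ Icc a b, HasDerivWithinAt R' (R'' x) (Icc a b) x)
    (hq : ∀ x ∈ Icc a b, μ ^ 2 * R x ^ 2 ≤ R x * R'' x) :
    MonotoneOn (fun x => Real.exp (-(2 * μ * x)) * (R x * R' x)) (Icc a b) := by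
  have hexp (x : ℝ) : HasDerivAt (fun x => Real.exp (-(2 * μ * x)))
      (Real.exp (-(2 * μ * x)) * -(2 * μ)) x := by
    simpa using ((hasDerivAt_id x).const_mul (2 * μ)).neg.exp
  refine monotoneOn_of_hasDerivWithinAt_nonneg (convex_Icc a b)
    (fun x hx => (hexp x).continuousAt.continuousWithinAt.mul
      (continuousOn_mul_deriv hR hR' x hx))
    (fun x hx => ((hexp x).mul
      (hasDerivAt_mul_deriv hR hR' (by rwa [interior_Icc] at hx))).hasDerivWithinAt)
    fun x hx => ?_
  have hx' : x ∈ Icc a b := interior_subset hx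
  -- the derivative is `exp (-2μx) * ((R' - μ R)² + (R R'' - μ² R²))`
  nlinarith [mul_nonneg (Real.exp_pos (-(2 * μ * x))).le (sq_nonneg (R' x - μ * R x)),
    mul_nonneg (Real.exp_pos (-(2 * μ * x))).le (sub_nonneg.2 (hq x hx'))]

theorem mul_deriv_nonneg
    (hR : ∀ x ∈ Icc a b, HasDerivWithinAt R (R' x) (Icc a b) x)
    (hR' : ∀ x ∈ Icc a b, HasDerivWithinAt R' (R'' x) (Icc a b) x)
    (hq : ∀ x ∈ Icc a b, μ ^ 2 * R x ^ 2 ≤ R x * R'' x) (hRa : R a = 0)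
    {y : ℝ} (hy : y ∈ Icc a b) : 0 ≤ R y * R' y := by
  have h := monotoneOn_exp_mul_mul_deriv hR hR' hq ⟨le_rfl, hy.1.trans hy.2⟩ hy hy.1
  simp only [hRa, zero_mul, mul_zero] at h
  exact nonneg_of_mul_nonneg_right h (Real.exp_pos _)

theorem mul_deriv_le_exp_mul
    (hR : ∀ x ∈ Icc a b, HasDerivWithinAt R (R' x) (Icc a b) x)
    (hR' : ∀ x ∈ Icc a b, HasDerivWithinAt R' (R'' x) (Icc a b) x)
    (hq : ∀ x ∈ Icc a b, μ ^ 2 * R x ^ 2 ≤ R x * R'' x)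
    {x y : ℝ} (hx : x ∈ Icc a b) (hy : y ∈ Icc a b) (hxy : x ≤ y) :
    R x * R' x ≤ Real.exp (-(2 * μ * (y - x))) * (R y * R' y) := by
  have h := monotoneOn_exp_mul_mul_deriv hR hR' hq hx hy hxy
  have hsplit : Real.exp (-(2 * μ * (y - x))) =
      Real.exp (2 * μ * x) * Real.exp (-(2 * μ * y)) := by
    rw [← Real.exp_add]; ring_nf
  calc R x * R' x = Real.exp (2 * μ * x) * (Real.exp (-(2 * μ * x)) * (R x * R' x)) := by
        rw [← mul_assoc, ← Real.exp_add]; simp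
    _ ≤ Real.exp (2 * μ * x) * (Real.exp (-(2 * μ * y)) * (R y * R' y)) := by gcongr
    _ = Real.exp (-(2 * μ * (y - x))) * (R y * R' y) := by rw [hsplit]; ring

theorem integral_energy_le_mul_deriv {η lam : ℝ} (hη : 0 < η) (hlam : 0 ≤ lam)
    (hR : ∀ x ∈ Icc a b, HasDerivWithinAt R (R' x) (Icc a b) x)
    (hR' : ∀ x ∈ Icc a b, HasDerivWithinAt R' (R'' x) (Icc a b) x)
    (hR'' : ContinuousOn R'' (Icc a b))
    (hq : ∀ x ∈ Icc a b, η * lam * R x ^ 2 ≤ R x * R'' x) (hRa : R a = 0)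
    {x₀ : ℝ} (hx₀ : x₀ ∈ Icc a b) :
    ∫ x in a..x₀, (R' x ^ 2 + lam * R x ^ 2) ≤ (1 + 1 / η) * (R x₀ * R' x₀) := by
  have hsub : Icc a x₀ ⊆ Icc a b := Icc_subset_Icc_right hx₀.2
  have hRc : ContinuousOn R (Icc a x₀) := fun x hx => (hR x (hsub hx)).continuousWithinAt.mono hsub
  have hR'c : ContinuousOn R' (Icc a x₀) :=
    fun x hx => (hR' x (hsub hx)).continuousWithinAt.mono hsub
  have hflux : ∫ x in a..x₀, (R' x ^ 2 + R x * R'' x) = R x₀ * R' x₀ := by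
    rw [intervalIntegral.integral_eq_sub_of_hasDerivAt_of_le hx₀.1
      ((continuousOn_mul_deriv hR hR').mono hsub)
      (fun x hx => hasDerivAt_mul_deriv hR hR' (Ioo_subset_Ioo_right hx₀.2 hx))
      (((hR'c.pow 2).add (hRc.mul (hR''.mono hsub))).intervalIntegrable_of_Icc hx₀.1), hRa]
    ring
  rw [← hflux, ← intervalIntegral.integral_const_mul]
  refine intervalIntegral.integral_mono_on hx₀.1
    (((hR'c.pow 2).add (continuousOn_const.mul (hRc.pow 2))).intervalIntegrable_of_Icc hx₀.1)
    ((continuousOn_const.mul ((hR'c.pow 2).add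
      (hRc.mul (hR''.mono hsub)))).intervalIntegrable_of_Icc hx₀.1)
    fun x hx => ?_
  have hqx := hq x (hsub hx)
  have hRR'' : 0 ≤ R x * R'' x := le_trans (by positivity) hqx
  have hlamR : lam * R x ^ 2 ≤ 1 / η * (R x * R'' x) :=
    calc lam * R x ^ 2 = 1 / η * (η * lam * R x ^ 2) := by field_simp
      _ ≤ 1 / η * (R x * R'' x) := by gcongr
  linarith [mul_nonneg (one_div_pos.2 hη).le (sq_nonneg (R' x))]

theorem mul_deriv_le_integral_energy {lam : ℝ} (hμ : 0 ≤ μ) (hlam : 1 ≤ lam)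
    (hR : ∀ x ∈ Icc a b, HasDerivWithinAt R (R' x) (Icc a b) x)
    (hR' : ∀ x ∈ Icc a b, HasDerivWithinAt R' (R'' x) (Icc a b) x)
    (hq : ∀ x ∈ Icc a b, μ ^ 2 * R x ^ 2 ≤ R x * R'' x) (hRa : R a = 0)
    {x₀ x₁ : ℝ} (hx₀ : a ≤ x₀) (hx₀₁ : x₀ ≤ x₁) (hx₁ : x₁ ≤ b) :
    (b - x₁) * (R x₀ * R' x₀) ≤
      Real.exp (-(2 * μ * (x₁ - x₀))) / 2 * ∫ x in x₁..b, (R' x ^ 2 + lam * R x ^ 2) := by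
  have hsub : Icc x₁ b ⊆ Icc a b := Icc_subset_Icc_left (hx₀.trans hx₀₁)
  have hRc : ContinuousOn R (Icc x₁ b) := fun x hx => (hR x (hsub hx)).continuousWithinAt.mono hsub
  have hR'c : ContinuousOn R' (Icc x₁ b) :=
    fun x hx => (hR' x (hsub hx)).continuousWithinAt.mono hsub
  rw [← intervalIntegral.integral_const_mul, ← smul_eq_mul, ← intervalIntegral.integral_const]
  refine intervalIntegral.integral_mono_on hx₁ intervalIntegrable_const
    ((continuousOn_const.mul ((hR'c.pow 2).add
      (continuousOn_const.mul (hRc.pow 2)))).intervalIntegrable_of_Icc hx₁) fun x hx => ?_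
  have hx' := hsub hx
  have hflux := mul_deriv_nonneg hR hR' hq hRa hx'
  calc R x₀ * R' x₀ ≤ Real.exp (-(2 * μ * (x - x₀))) * (R x * R' x) :=
        mul_deriv_le_exp_mul hR hR' hq ⟨hx₀, hx₀₁.trans hx₁⟩ hx' (hx₀₁.trans hx.1)
    _ ≤ Real.exp (-(2 * μ * (x₁ - x₀))) * (R x * R' x) := by gcongr; exact hx.1
    _ ≤ Real.exp (-(2 * μ * (x₁ - x₀))) / 2 * (R' x ^ 2 + lam * R x ^ 2) := by
        rw [div_mul_eq_mul_div, le_div_iff₀ two_pos, mul_assoc]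
        gcongr
        nlinarith [sq_nonneg (R x - R' x), sq_nonneg (R x)]

theorem integral_energy_le_exp_mul {η lam δ x₀ : ℝ} (hη : 0 < η) (hlam : 1 ≤ lam) (hδ : 0 < δ)
    (hx₀ : a ≤ x₀)
    (hR : ∀ x ∈ Icc a (x₀ + 2 * δ), HasDerivWithinAt R (R' x) (Icc a (x₀ + 2 * δ)) x)
    (hR' : ∀ x ∈ Icc a (x₀ + 2 * δ), HasDerivWithinAt R' (R'' x) (Icc a (x₀ + 2 * δ)) x)
    (hR'' : ContinuousOn R'' (Icc a (x₀ + 2 * δ)))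
    (hq : ∀ x ∈ Icc a (x₀ + 2 * δ), η * lam * R x ^ 2 ≤ R x * R'' x) (hRa : R a = 0) :
    ∫ x in a..x₀, (R' x ^ 2 + lam * R x ^ 2) ≤
      (1 + 1 / η) / (2 * δ) * Real.exp (-(2 * √(η * lam) * δ)) *
        ∫ x in x₀ + δ..x₀ + 2 * δ, (R' x ^ 2 + lam * R x ^ 2) := by
  have hμ : √(η * lam) ^ 2 = η * lam := Real.sq_sqrt (by positivity)
  have henergy := integral_energy_le_mul_deriv hη (by linarith) hR hR' hR'' hq hRa
    ⟨hx₀, by linarith⟩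
  have haverage := mul_deriv_le_integral_energy (Real.sqrt_nonneg _) hlam hR hR'
    (fun x hx => hμ ▸ hq x hx) hRa hx₀ (by linarith : x₀ ≤ x₀ + δ) (by linarith)
  rw [show x₀ + 2 * δ - (x₀ + δ) = δ by ring, add_sub_cancel_left] at haverage
  calc _ ≤ (1 + 1 / η) * (R x₀ * R' x₀) := henergy
    _ ≤ (1 + 1 / η) * (Real.exp (-(2 * √(η * lam) * δ)) / 2 *
          (∫ x in x₀ + δ..x₀ + 2 * δ, (R' x ^ 2 + lam * R x ^ 2)) / δ) := by
      gcongr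
      rwa [le_div_iff₀ hδ, mul_comm]
    _ = _ := by ring

theorem integral_energy_mono_interval {c d lam : ℝ} (hR : ContinuousOn R (Icc a b))
    (hR' : ContinuousOn R' (Icc a b)) (hlam : 0 ≤ lam) (hac : a ≤ c) (hcd : c ≤ d) (hdb : d ≤ b) :
    ∫ x in c..d, (R' x ^ 2 + lam * R x ^ 2) ≤ ∫ x in a..b, (R' x ^ 2 + lam * R x ^ 2) :=
  intervalIntegral.integral_mono_interval hac hcd hdb
    (Eventually.of_forall fun x => by simp only [Pi.zero_apply]; positivity)
    (((hR'.pow 2).add (continuousOn_const.mul (hR.pow 2))).intervalIntegrable_of_Icc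
      (hac.trans (hcd.trans hdb)))

end Agmon

theorem exp_neg_two_mul_sqrt_mul_le {η δ lam t C : ℝ} (hη : 0 < η) (hδ : 0 < δ) (ht : 0 ≤ t)
    (hlam : t ^ 2 ≤ lam) (hC : 1 / (2 * δ * √η) ≤ C) :
    Real.exp (-(2 * √(η * lam) * δ)) ≤ Real.exp (-t / C) := by
  have htμ : √η * t ≤ √(η * lam) := by
    rw [← Real.sqrt_sq ht, ← Real.sqrt_mul hη.le]
    exact Real.sqrt_le_sqrt (by gcongr)
  rw [Real.exp_le_exp, neg_div, neg_le_neg_iff]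
  calc t / C ≤ t / (1 / (2 * δ * √η)) := div_le_div_of_nonneg_left ht (by positivity) hC
    _ = 2 * (√η * t) * δ := by rw [div_div_eq_mul_div, div_one]; ring
    _ ≤ 2 * √(η * lam) * δ := by gcongr

theorem eta_mul_sq_le_mul_of_gap {M k η w w₀ r lam ω v u u'' : ℝ} (hM : 0 < M) (hη : 0 ≤ η)
    (hr : 3 * M ≤ r) (hw : w₀ ≤ w) (hgap : k ^ 2 + 3 * η < w₀) (hlam : 2 ≤ lam)
    (hlamη : 2 * (k ^ 2 + 3 * η) ≤ η * lam) (hω : ω ^ 2 ≤ (k ^ 2 + η) * lam)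
    (hv : v = w * (lam - 6 * M / r)) (hode : -u'' + v * u = ω ^ 2 * u) :
    η * lam * u ^ 2 ≤ u * u'' := by
  have hMr : 6 * M / r ≤ 2 := by rw [div_le_iff₀ (by linarith)]; linarith
  have hw₀ : 0 ≤ w := by nlinarith [sq_nonneg k]
  have hpot : η * lam ≤ v - ω ^ 2 := by
    rw [hv]
    nlinarith [mul_le_mul_of_nonneg_left (by linarith : lam - 2 ≤ lam - 6 * M / r) hw₀,
      mul_le_mul_of_nonneg_right (hgap.le.trans hw) (by linarith : 0 ≤ lam - 2)]
  rw [show u * u'' = (v - ω ^ 2) * u ^ 2 by linear_combination (-u) * hode]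
  exact mul_le_mul_of_nonneg_right hpot (sq_nonneg u)

theorem statement18_general
    (M k a : ℝ) (hM : 0 < M)
    (ρ W : ℝ → ℝ) (V : ℕ → ℝ → ℝ)
    (hρge : ∀ x ∈ Set.Ico a (Real.pi / 2), 3 * M ≤ ρ x)
    (hWanti : StrictAntiOn W (Set.Icc a (Real.pi / 2)))
    (hV : ∀ ℓ : ℕ, 2 ≤ ℓ → ∀ x ∈ Set.Ico a (Real.pi / 2),
      V ℓ x = W x * ((ℓ : ℝ) * ((ℓ : ℝ) + 1) - 6 * M / ρ x))
    (x₀ δ η : ℝ)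
    (hx₀ : x₀ ∈ Set.Ioo a (Real.pi / 2)) (hδ : 0 < δ)
    (hx₀δ : x₀ + 2 * δ < Real.pi / 2)
    (hη : 0 < η) (hgap : k ^ 2 + 3 * η < W (x₀ + 2 * δ)) :
    ∃ C : ℝ, 0 < C ∧ ∃ L : ℕ, ∀ ℓ : ℕ, L ≤ ℓ →
      ∀ (ω : ℝ) (R R' R'' : ℝ → ℝ),
        EVPsol M k a (V ℓ) ℓ ω R R' R'' →
        ω ^ 2 ≤ (k ^ 2 + η) * ((ℓ : ℝ) * ((ℓ : ℝ) + 1)) →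
        (∫ x in a..x₀, ((R' x) ^ 2 + ((ℓ : ℝ) * ((ℓ : ℝ) + 1)) * (R x) ^ 2))
          ≤ C * Real.exp (-(ℓ : ℝ) / C) *
              (∫ x in a..(Real.pi / 2),
                ((R' x) ^ 2 + ((ℓ : ℝ) * ((ℓ : ℝ) + 1)) * (R x) ^ 2)) := by
  obtain ⟨hax₀, -⟩ := hx₀
  have hsub : Icc a (x₀ + 2 * δ) ⊆ Icc a (Real.pi / 2) := Icc_subset_Icc_right hx₀δ.le
  set C := max ((1 + 1 / η) / (2 * δ)) (1 / (2 * δ * √η))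
  refine ⟨C, lt_max_of_lt_left (by positivity), max 2 ⌈2 * (k ^ 2 + 3 * η) / η⌉₊, ?_⟩
  rintro ℓ hℓ ω R R' R'' ⟨hR, hR', hR'', hode, hRa, -⟩ hω
  set lam := (ℓ : ℝ) * ((ℓ : ℝ) + 1)
  have hℓ2 : 2 ≤ ℓ := le_of_max_le_left hℓ
  have hℓ2' : (2 : ℝ) ≤ ℓ := by exact_mod_cast hℓ2
  have hlamη : 2 * (k ^ 2 + 3 * η) ≤ η * lam := by
    have hℓη := Nat.ceil_le.1 (le_of_max_le_right hℓ)
    rw [div_le_iff₀' hη] at hℓη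
    nlinarith
  have hb : x₀ + 2 * δ ∈ Icc a (Real.pi / 2) := hsub ⟨by linarith, le_rfl⟩
  have hq : ∀ x ∈ Icc a (x₀ + 2 * δ), η * lam * R x ^ 2 ≤ R x * R'' x := fun x hx =>
    have hx' : x ∈ Ico a (Real.pi / 2) := ⟨hx.1, hx.2.trans_lt hx₀δ⟩
    eta_mul_sq_le_mul_of_gap hM hη.le (hρge x hx') ((hWanti.le_iff_ge hb (hsub hx)).2 hx.2)
      hgap (by nlinarith) hlamη hω (hV ℓ hℓ2 x hx') (hode x (hsub hx))
  have hexp : Real.exp (-(2 * √(η * lam) * δ)) ≤ Real.exp (-ℓ / C) :=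
    exp_neg_two_mul_sqrt_mul_le hη hδ (Nat.cast_nonneg ℓ) (by nlinarith) (le_max_right _ _)
  have henergy := integral_energy_mono_interval (lam := lam)
    (fun x hx => (hR x hx).continuousWithinAt) (fun x hx => (hR' x hx).continuousWithinAt)
    (by positivity) (by linarith : a ≤ x₀ + δ) (by linarith) hx₀δ.le
  calc _ ≤ (1 + 1 / η) / (2 * δ) * Real.exp (-(2 * √(η * lam) * δ)) *
        ∫ x in x₀ + δ..x₀ + 2 * δ, (R' x ^ 2 + lam * R x ^ 2) :=
      integral_energy_le_exp_mul hη (by nlinarith) hδ hax₀.le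
        (fun x hx => (hR x (hsub hx)).mono hsub) (fun x hx => (hR' x (hsub hx)).mono hsub)
        (hR''.mono hsub) hq hRa
    _ ≤ _ := by
      gcongr
      · exact intervalIntegral.integral_nonneg (by linarith) fun x _ => by positivity
      · exact le_max_left _ _

/-- Agmon estimate: the energy of eigenfunctions of the truncated
"Robin" Regge–Wheeler eigenvalue problem with `ω² ≤ (k²+η)ℓ(ℓ+1)` is exponentially
small (in `ℓ`) in the classically forbidden region `[a, x₀]`. -/
theorem statement18
    (M k a : ℝ) (hM : 0 < M) (hk : 0 < k) (ha : a < Real.pi / 2)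
    (ρ W : ℝ → ℝ) (V : ℕ → ℝ → ℝ)
    (hρa : ρ a = 3 * M)
    (hρge : ∀ x ∈ Set.Ico a (Real.pi / 2), 3 * M ≤ ρ x)
    (hρd : ∀ x ∈ Set.Ico a (Real.pi / 2),
      HasDerivWithinAt ρ (Del M k (ρ x) / (ρ x) ^ 2) (Set.Ico a (Real.pi / 2)) x)
    (hρtop : Tendsto ρ (𝓝[<] (Real.pi / 2)) atTop)
    (hW : ∀ x ∈ Set.Ico a (Real.pi / 2), W x = Del M k (ρ x) / (ρ x) ^ 4)
    (hWend : W (Real.pi / 2) = k ^ 2)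
    (hWcont : ContinuousOn W (Set.Icc a (Real.pi / 2)))
    (hWanti : StrictAntiOn W (Set.Icc a (Real.pi / 2)))
    (hV : ∀ ℓ : ℕ, 2 ≤ ℓ → ∀ x ∈ Set.Ico a (Real.pi / 2),
      V ℓ x = W x * ((ℓ : ℝ) * ((ℓ : ℝ) + 1) - 6 * M / ρ x))
    (hVend : ∀ ℓ : ℕ, 2 ≤ ℓ → V ℓ (Real.pi / 2) = k ^ 2 * ((ℓ : ℝ) * ((ℓ : ℝ) + 1)))
    (hVcont : ∀ ℓ : ℕ, 2 ≤ ℓ → ContinuousOn (V ℓ) (Set.Icc a (Real.pi / 2)))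
    (x₀ δ η : ℝ)
    (hx₀ : x₀ ∈ Set.Ioo a (Real.pi / 2)) (hδ : 0 < δ)
    (hx₀δ : x₀ + 2 * δ < Real.pi / 2)
    (hη : 0 < η) (hgap : k ^ 2 + 3 * η < W (x₀ + 2 * δ)) :
    ∃ C : ℝ, 0 < C ∧ ∃ L : ℕ, ∀ ℓ : ℕ, L ≤ ℓ →
      ∀ (ω : ℝ) (R R' R'' : ℝ → ℝ),
        EVPsol M k a (V ℓ) ℓ ω R R' R'' →
        ω ^ 2 ≤ (k ^ 2 + η) * ((ℓ : ℝ) * ((ℓ : ℝ) + 1)) →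
        (∫ x in a..x₀, ((R' x) ^ 2 + ((ℓ : ℝ) * ((ℓ : ℝ) + 1)) * (R x) ^ 2))
          ≤ C * Real.exp (-(ℓ : ℝ) / C) *
              (∫ x in a..(Real.pi / 2),
                ((R' x) ^ 2 + ((ℓ : ℝ) * ((ℓ : ℝ) + 1)) * (R x) ^ 2)) :=
  statement18_general M k a hM ρ W V hρge hWanti hV x₀ δ η hx₀ hδ hx₀δ hη hgap

end RWradial
end
end

section
/- Let c₀ ≥ 1. There exist constants C ≥ 1 and L > 0 (depending only on M, k, a, c₀) such that for every integer ℓ ≥ L, every ω∈ℝ with c₀⁻¹ℓ(ℓ+1) ≤ ω² ≤ c₀ℓ(ℓ+1), and every twice continuously differentiable solution R:[a,π/2]→ℝ of the truncated 'Robin' Regge–Wheeler eigenvalue problem (−R″+V_ℓR=ω²R on [a,π/2], R(a)=0, −2ω²R(π/2)+(ℓ(ℓ+1)(ℓ(ℓ+1)−2)/(6M))R′(π/2)+k²ℓ(ℓ+1)R(π/2)=0), one has the two-sided energy equivalence C⁻¹ ℓ² ∫ₐ^{π/2} R² dx ≤ ∫ₐ^{π/2}( ω²R² + (R′)² + ℓ²R²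 ) dx ≤ C ℓ² ∫ₐ^{π/2} R² dx. -/
/-! Multiplying the equation by `R` and integrating by parts gives
`∫ R'² + ∫ (V_ℓ - ω²) R² = R(π/2) R'(π/2)`. Since `|V_ℓ| ≤ (sup |W|) ℓ(ℓ+1)` (as `ρ ≥ 3M`) and
`ω² ≤ c₀ ℓ(ℓ+1)`, the potential term is at least `-O(ℓ²) ∫ R²`. The Robin condition says
`R'(π/2) = c R(π/2)` with `c = 6M(2ω² - k²ℓ(ℓ+1)) / (ℓ(ℓ+1)(ℓ(ℓ+1) - 2)) = O(ℓ⁻²)`, so for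
large `ℓ` the boundary term is at most `R(π/2)²/2 ≤ (∫ R² + ∫ R'²)/2`, using `R(a) = 0`.
Hence `∫ R'² = O(ℓ²) ∫ R²`, which is the upper bound; the lower bound holds because the
energy contains `ℓ² ∫ R²`. -/

/- The truncated "Robin" Regge–Wheeler eigenvalue problem on [a, π/2]
   (tortoise coordinate, truncated at r = 3M). -/

noncomputable section

open Filter Topology Set

namespace RWradial

open MeasureTheory

section IntervalEstimates

variable {a b : ℝ} {R R' R'' : ℝ → ℝ}

lemma integral_mul_sq_add_deriv_sq_add_mul_sq (hab : a ≤ b)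
    (hRc : ContinuousOn R (Icc a b)) (hR'c : ContinuousOn R' (Icc a b)) (α β : ℝ) :
    ∫ x in a..b, (α * R x ^ 2 + R' x ^ 2 + β * R x ^ 2)
      = α * (∫ x in a..b, R x ^ 2) + (∫ x in a..b, R' x ^ 2) + β * ∫ x in a..b, R x ^ 2 := by
  have hR2 : IntervalIntegrable (fun x => R x ^ 2) volume a b :=
    (hRc.pow 2).intervalIntegrable_of_Icc hab
  have hR'2 : IntervalIntegrable (fun x => R' x ^ 2) volume a b :=
    (hR'c.pow 2).intervalIntegrable_of_Icc hab
  rw [intervalIntegral.integral_add ((hR2.const_mul α).add hR'2) (hR2.const_mul β),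
    intervalIntegral.integral_add (hR2.const_mul α) hR'2,
    intervalIntegral.integral_const_mul, intervalIntegral.integral_const_mul]

lemma sq_le_integral_sq_add_integral_deriv_sq (hab : a ≤ b)
    (hR : ∀ x ∈ Icc a b, HasDerivWithinAt R (R' x) (Icc a b) x)
    (hR'c : ContinuousOn R' (Icc a b)) (hRa : R a = 0) :
    R b ^ 2 ≤ (∫ x in a..b, R x ^ 2) + ∫ x in a..b, R' x ^ 2 := by
  have hRc : ContinuousOn R (Icc a b) := fun x hx => (hR x hx).continuousWithinAt
  rw [← uIcc_of_le hab] at hR hR'c hRc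
  have hparts := intervalIntegral.integral_deriv_mul_eq_sub_of_hasDerivWithinAt hR hR
    hR'c.intervalIntegrable hR'c.intervalIntegrable
  calc R b ^ 2 = ∫ x in a..b, (R' x * R x + R x * R' x) := by rw [hparts, hRa]; ring
    _ ≤ ∫ x in a..b, (R x ^ 2 + R' x ^ 2) :=
        intervalIntegral.integral_mono_on hab
          ((hR'c.mul hRc).add (hRc.mul hR'c)).intervalIntegrable
          ((hRc.pow 2).add (hR'c.pow 2)).intervalIntegrable
          fun x _ => by nlinarith [sq_nonneg (R x - R' x)]
    _ = (∫ x in a..b, R x ^ 2) + ∫ x in a..b, R' x ^ 2 :=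
        intervalIntegral.integral_add (hRc.pow 2).intervalIntegrable
          (hR'c.pow 2).intervalIntegrable

lemma integral_deriv_sq_le (hab : a ≤ b)
    (hR : ∀ x ∈ Icc a b, HasDerivWithinAt R (R' x) (Icc a b) x)
    (hR' : ∀ x ∈ Icc a b, HasDerivWithinAt R' (R'' x) (Icc a b) x)
    (hR''c : ContinuousOn R'' (Icc a b)) (hRa : R a = 0)
    (hbdry : R b * R' b ≤ R b ^ 2 / 2) {Q : ℝ}
    (hQ : ∀ x ∈ Ioo a b, -Q * R x ^ 2 ≤ R x * R'' x) :
    ∫ x in a..b, R' x ^ 2 ≤ (1 + 2 * Q) * ∫ x in a..b, R x ^ 2 := by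
  have hRc : ContinuousOn R (Icc a b) := fun x hx => (hR x hx).continuousWithinAt
  have hR'c : ContinuousOn R' (Icc a b) := fun x hx => (hR' x hx).continuousWithinAt
  have htrace := sq_le_integral_sq_add_integral_deriv_sq hab hR hR'c hRa
  have iR2 : IntervalIntegrable (fun x => R x ^ 2) volume a b :=
    (hRc.pow 2).intervalIntegrable_of_Icc hab
  have iR'2 : IntervalIntegrable (fun x => R' x ^ 2) volume a b :=
    (hR'c.pow 2).intervalIntegrable_of_Icc hab
  have iRR'' : IntervalIntegrable (fun x => R x * R'' x) volume a b :=
    (hRc.mul hR''c).intervalIntegrable_of_Icc hab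
  have hparts : (∫ x in a..b, R' x ^ 2) + ∫ x in a..b, R x * R'' x = R b * R' b := by
    rw [← uIcc_of_le hab] at hR hR' hR'c hR''c
    have h := intervalIntegral.integral_deriv_mul_eq_sub_of_hasDerivWithinAt hR hR'
      hR'c.intervalIntegrable hR''c.intervalIntegrable
    rw [hRa, zero_mul, sub_zero] at h
    rw [← h, ← intervalIntegral.integral_add iR'2 iRR'']
    simp only [sq]
  have hlower : -Q * ∫ x in a..b, R x ^ 2 ≤ ∫ x in a..b, R x * R'' x := by
    rw [← intervalIntegral.integral_const_mul]
    exact intervalIntegral.integral_mono_on_of_le_Ioo hab (iR2.const_mul _) iRR'' hQ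
  nlinarith

end IntervalEstimates

lemma abs_potential_le {M r P w B : ℝ} (hM : 0 < M) (hr : 3 * M ≤ r) (hP : 2 ≤ P)
    (hw : |w| ≤ B) : |w * (P - 6 * M / r)| ≤ B * P := by
  have hr0 : 0 < r := by linarith
  have h6 : 6 * M / r ≤ 2 := by rw [div_le_iff₀ hr0]; linarith
  have h6' : 0 ≤ 6 * M / r := by positivity
  rw [abs_mul]
  exact mul_le_mul hw (abs_le.2 ⟨by linarith, by linarith⟩) (abs_nonneg _)
    ((abs_nonneg _).trans hw)

lemma neg_mul_sq_le_mul_of_eigen_eq {v A ω c r r'' : ℝ} (hv : |v| ≤ A) (hω : ω ^ 2 ≤ c)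
    (h : -r'' + v * r = ω ^ 2 * r) : -(A + c) * r ^ 2 ≤ r * r'' := by
  have hr'' : r'' = (v - ω ^ 2) * r := by linarith
  rw [hr'']
  nlinarith [(abs_le.1 hv).1, sq_nonneg r]

lemma mul_le_half_sq_of_robin {M k c P ω x y : ℝ} (hM : 0 < M) (hP2 : 2 < P)
    (hP : 24 * M * c + 2 ≤ P) (hω : ω ^ 2 ≤ c * P)
    (hrobin : -2 * ω ^ 2 * x + (P * (P - 2) / (6 * M)) * y + k ^ 2 * P * x = 0) :
    x * y ≤ x ^ 2 / 2 := by
  have hD : 0 < P * (P - 2) / (6 * M) := by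
    apply div_pos (mul_pos _ _) _ <;> linarith
  have hcD : 2 * c * P ≤ P * (P - 2) / (6 * M) / 2 := by
    rw [div_div, le_div_iff₀ (by positivity)]
    nlinarith
  have hDxy : P * (P - 2) / (6 * M) * (x * y) = (2 * ω ^ 2 - k ^ 2 * P) * x ^ 2 := by
    linear_combination x * hrobin
  refine le_of_mul_le_mul_left ?_ hD
  rw [hDxy]
  nlinarith [sq_nonneg x, sq_nonneg k, mul_nonneg (sq_nonneg k) (by linarith : 0 ≤ P)]

lemma energy_bounds_of_integral_deriv_sq_le {ℓ ω c₀ B I J : ℝ} (hℓ : 1 ≤ ℓ) (hB : 0 ≤ B)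
    (hc₀ : 1 ≤ c₀) (hω : ω ^ 2 ≤ c₀ * (ℓ * (ℓ + 1))) (hI : 0 ≤ I) (hJ0 : 0 ≤ J)
    (hJ : J ≤ (1 + 2 * (B * (ℓ * (ℓ + 1)) + c₀ * (ℓ * (ℓ + 1)))) * I) :
    (6 * c₀ + 4 * B + 2)⁻¹ * ℓ ^ 2 * I ≤ ω ^ 2 * I + J + ℓ ^ 2 * I ∧
      ω ^ 2 * I + J + ℓ ^ 2 * I ≤ (6 * c₀ + 4 * B + 2) * ℓ ^ 2 * I := by
  have hCinv : (6 * c₀ + 4 * B + 2)⁻¹ ≤ 1 := inv_le_one_of_one_le₀ (by linarith)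
  have hP : ℓ * (ℓ + 1) ≤ 2 * ℓ ^ 2 := by nlinarith
  constructor
  · nlinarith [mul_nonneg (mul_nonneg (sub_nonneg.2 hCinv) (sq_nonneg ℓ)) hI,
      mul_nonneg (sq_nonneg ω) hI]
  · nlinarith [mul_nonneg (sub_nonneg.2 hω) hI, mul_nonneg (sub_nonneg.2 hP) hI,
      mul_nonneg (sub_nonneg.2 (one_le_pow₀ hℓ : (1 : ℝ) ≤ ℓ ^ 2)) hI,
      mul_nonneg (add_nonneg hB (by linarith : (0 : ℝ) ≤ c₀)) hI]

theorem statement19_general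
    (M k a : ℝ) (hM : 0 < M) (ha : a < Real.pi / 2)
    (ρ W : ℝ → ℝ) (V : ℕ → ℝ → ℝ)
    (hρge : ∀ x ∈ Set.Ico a (Real.pi / 2), 3 * M ≤ ρ x)
    (hWcont : ContinuousOn W (Set.Icc a (Real.pi / 2)))
    (hV : ∀ ℓ : ℕ, 2 ≤ ℓ → ∀ x ∈ Set.Ico a (Real.pi / 2),
      V ℓ x = W x * ((ℓ : ℝ) * ((ℓ : ℝ) + 1) - 6 * M / ρ x))
    (c₀ : ℝ) (hc₀ : 1 ≤ c₀) :
    ∃ C : ℝ, 1 ≤ C ∧ ∃ L : ℕ, ∀ ℓ : ℕ, L ≤ ℓ →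
      ∀ (ω : ℝ) (R R' R'' : ℝ → ℝ),
        EVPsol M k a (V ℓ) ℓ ω R R' R'' →
        c₀⁻¹ * ((ℓ : ℝ) * ((ℓ : ℝ) + 1)) ≤ ω ^ 2 →
        ω ^ 2 ≤ c₀ * ((ℓ : ℝ) * ((ℓ : ℝ) + 1)) →
        C⁻¹ * (ℓ : ℝ) ^ 2 * (∫ x in a..(Real.pi / 2), (R x) ^ 2)
          ≤ (∫ x in a..(Real.pi / 2),
              (ω ^ 2 * (R x) ^ 2 + (R' x) ^ 2 + (ℓ : ℝ) ^ 2 * (R x) ^ 2))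
        ∧ (∫ x in a..(Real.pi / 2),
              (ω ^ 2 * (R x) ^ 2 + (R' x) ^ 2 + (ℓ : ℝ) ^ 2 * (R x) ^ 2))
            ≤ C * (ℓ : ℝ) ^ 2 * (∫ x in a..(Real.pi / 2), (R x) ^ 2) := by
  obtain ⟨B, hB⟩ := isCompact_Icc.exists_bound_of_continuousOn hWcont
  have hB0 : 0 ≤ B := (norm_nonneg _).trans (hB a ⟨le_rfl, ha.le⟩)
  refine ⟨6 * c₀ + 4 * B + 2, by linarith, ⌈24 * M * c₀⌉₊ + 2, ?_⟩
  intro ℓ hℓ ω R R' R'' ⟨hR, hR', hR''c, hode, hRa, hrobin⟩ _ hω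
  have hℓ2 : 2 ≤ ℓ := by omega
  have hℓ : 24 * M * c₀ + 2 ≤ (ℓ : ℝ) := by
    have : ((⌈24 * M * c₀⌉₊ + 2 : ℕ) : ℝ) ≤ ℓ := by exact_mod_cast hℓ
    push_cast at this
    linarith [Nat.le_ceil (24 * M * c₀)]
  have hP : (2 : ℝ) < ℓ * (ℓ + 1) := by nlinarith
  have hbdry := mul_le_half_sq_of_robin hM hP (by nlinarith) hω hrobin
  have hpot : ∀ x ∈ Ioo a (Real.pi / 2), -(B * (ℓ * (ℓ + 1)) + c₀ * (ℓ * (ℓ + 1))) * R x ^ 2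
      ≤ R x * R'' x := fun x hx => by
    have hx : x ∈ Ico a (Real.pi / 2) := Ioo_subset_Ico_self hx
    have hVx := abs_potential_le hM (hρge x hx) hP.le (hB x (Ico_subset_Icc_self hx))
    rw [← hV ℓ hℓ2 x hx] at hVx
    exact neg_mul_sq_le_mul_of_eigen_eq hVx hω (hode x (Ico_subset_Icc_self hx))
  have hRc : ContinuousOn R (Icc a (Real.pi / 2)) := fun x hx => (hR x hx).continuousWithinAt
  have hR'c : ContinuousOn R' (Icc a (Real.pi / 2)) := fun x hx => (hR' x hx).continuousWithinAt
  rw [integral_mul_sq_add_deriv_sq_add_mul_sq ha.le hRc hR'c]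
  exact energy_bounds_of_integral_deriv_sq_le (by norm_cast; omega) hB0 hc₀ hω
    (intervalIntegral.integral_nonneg ha.le fun x _ => sq_nonneg _)
    (intervalIntegral.integral_nonneg ha.le fun x _ => sq_nonneg _)
    (integral_deriv_sq_le ha.le hR hR' hR''c hRa hbdry hpot)

/-- Two-sided energy equivalence for eigenfunctions of the truncated
"Robin" Regge–Wheeler eigenvalue problem whose eigenvalue satisfies
`c₀⁻¹ℓ(ℓ+1) ≤ ω² ≤ c₀ℓ(ℓ+1)`. -/
theorem statement19
    (M k a : ℝ) (hM : 0 < M) (hk : 0 < k) (ha : a < Real.pi / 2)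
    (ρ W : ℝ → ℝ) (V : ℕ → ℝ → ℝ)
    (hρa : ρ a = 3 * M)
    (hρge : ∀ x ∈ Set.Ico a (Real.pi / 2), 3 * M ≤ ρ x)
    (hρd : ∀ x ∈ Set.Ico a (Real.pi / 2),
      HasDerivWithinAt ρ (Del M k (ρ x) / (ρ x) ^ 2) (Set.Ico a (Real.pi / 2)) x)
    (hρtop : Tendsto ρ (𝓝[<] (Real.pi / 2)) atTop)
    (hW : ∀ x ∈ Set.Ico a (Real.pi / 2), W x = Del M k (ρ x) / (ρ x) ^ 4)
    (hWend : W (Real.pi / 2) = k ^ 2)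
    (hWcont : ContinuousOn W (Set.Icc a (Real.pi / 2)))
    (hV : ∀ ℓ : ℕ, 2 ≤ ℓ → ∀ x ∈ Set.Ico a (Real.pi / 2),
      V ℓ x = W x * ((ℓ : ℝ) * ((ℓ : ℝ) + 1) - 6 * M / ρ x))
    (hVend : ∀ ℓ : ℕ, 2 ≤ ℓ → V ℓ (Real.pi / 2) = k ^ 2 * ((ℓ : ℝ) * ((ℓ : ℝ) + 1)))
    (hVcont : ∀ ℓ : ℕ, 2 ≤ ℓ → ContinuousOn (V ℓ) (Set.Icc a (Real.pi / 2)))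
    (c₀ : ℝ) (hc₀ : 1 ≤ c₀) :
    ∃ C : ℝ, 1 ≤ C ∧ ∃ L : ℕ, ∀ ℓ : ℕ, L ≤ ℓ →
      ∀ (ω : ℝ) (R R' R'' : ℝ → ℝ),
        EVPsol M k a (V ℓ) ℓ ω R R' R'' →
        c₀⁻¹ * ((ℓ : ℝ) * ((ℓ : ℝ) + 1)) ≤ ω ^ 2 →
        ω ^ 2 ≤ c₀ * ((ℓ : ℝ) * ((ℓ : ℝ) + 1)) →
        C⁻¹ * (ℓ : ℝ) ^ 2 * (∫ x in a..(Real.pi / 2), (R x) ^ 2)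
          ≤ (∫ x in a..(Real.pi / 2),
              (ω ^ 2 * (R x) ^ 2 + (R' x) ^ 2 + (ℓ : ℝ) ^ 2 * (R x) ^ 2))
        ∧ (∫ x in a..(Real.pi / 2),
              (ω ^ 2 * (R x) ^ 2 + (R' x) ^ 2 + (ℓ : ℝ) ^ 2 * (R x) ^ 2))
            ≤ C * (ℓ : ℝ) ^ 2 * (∫ x in a..(Real.pi / 2), (R x) ^ 2) :=
  statement19_general M k a hM ha ρ W V hρge hWcont hV c₀ hc₀

end RWradial
end
end
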